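/- Let G̃ be obtained by Construction 1 from (G, H, v_c), with adjacency matrix Ã, and write v_c^1 = (v_c,1), v_c^2 = (v_c,2). Then for every natural number k and every vertex v ∈ V(G), the (v,1)-entry of Ã^k(e_{v_c^1} − e_{v_c^2}) equals the negative of its (v,2)-entry. -/
import Mathlib


set_option linter.unusedSectionVars false

open SimpleGraph Matrix

/-- `v` and `w` lie in the same orbit under the automorphisms of `G` fixing `vc`. -/
def SameOrbit {V : Type*} (G : SimpleGraph V) (vc v w : V) : Prop :=
  ∃ φ : G ≃g G, φ vc = vc ∧ φ v = w

/-- `Gt` is obtained from `(G, H, vc)` by Construction 1. -/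
def IsConstruction1 {V W : Type*} (G : SimpleGraph V) (H : SimpleGraph W)
    (vc : V) (Gt : SimpleGraph (V × Fin 2 ⊕ W)) : Prop :=
  (∀ i : Fin 2, ∀ v w : V, Gt.Adj (Sum.inl (v, i)) (Sum.inl (w, i)) ↔ G.Adj v w) ∧
  (∀ v w : V, ¬ Gt.Adj (Sum.inl (v, 0)) (Sum.inl (w, 1))) ∧
  (∀ v w : W, Gt.Adj (Sum.inr v) (Sum.inr w) ↔ H.Adj v w) ∧
  (∀ w : W, ∀ u : V,
    Nat.card {v : V // SameOrbit G vc u v ∧ Gt.Adj (Sum.inl (v, 0)) (Sum.inr w)} =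
    Nat.card {v : V // SameOrbit G vc u v ∧ Gt.Adj (Sum.inl (v, 1)) (Sum.inr w)})

section Aux

variable {V W : Type*} [Fintype V] [Fintype W] [DecidableEq V] [DecidableEq W]

omit [Fintype V] [DecidableEq V] in
lemma sameOrbit_refl (G : SimpleGraph V) (vc v : V) : SameOrbit G vc v v :=
  ⟨RelIso.refl G.Adj, rfl, rfl⟩

omit [Fintype V] [DecidableEq V] in
lemma sameOrbit_symm {G : SimpleGraph V} {vc v w : V} (h : SameOrbit G vc v w) :
    SameOrbit G vc w v := by
  obtain ⟨φ, h1, h2⟩ := h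
  refine ⟨φ.symm, ?_, ?_⟩
  · conv_lhs => rw [← h1]
    simp
  · conv_lhs => rw [← h2]
    simp

omit [Fintype V] [DecidableEq V] in
lemma sameOrbit_trans {G : SimpleGraph V} {vc v w u : V}
    (h : SameOrbit G vc v w) (h' : SameOrbit G vc w u) : SameOrbit G vc v u := by
  obtain ⟨φ, h1, h2⟩ := h
  obtain ⟨ψ, h3, h4⟩ := h'
  exact ⟨φ.trans ψ, by rw [RelIso.trans_apply, h1, h3],
    by rw [RelIso.trans_apply, h2, h4]⟩

/-- The orbit equivalence relation as a setoid. -/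
def orbitSetoid (G : SimpleGraph V) (vc : V) : Setoid V :=
  ⟨SameOrbit G vc, ⟨sameOrbit_refl G vc, sameOrbit_symm, sameOrbit_trans⟩⟩

lemma orbit_sum_eq (G : SimpleGraph V) (vc : V) (c : V → ℝ)
    (hc : ∀ v w, SameOrbit G vc v w → c v = c w)
    (p q : V → Prop) [DecidablePred p] [DecidablePred q]
    (hcard : ∀ u : V,
      Nat.card {v : V // SameOrbit G vc u v ∧ p v} =
      Nat.card {v : V // SameOrbit G vc u v ∧ q v}) :
    (∑ v : V, if p v then c v else 0) = ∑ v : V, if q v then c v else 0 := by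
  classical
  letI s : Setoid V := orbitSetoid G vc
  have key : ∀ (r : V → Prop) (_ : DecidablePred r),
      (∑ v : V, if r v then c v else 0)
        = ∑ j : Quotient s,
            (Nat.card {v : V // SameOrbit G vc j.out v ∧ r v} : ℝ) * c j.out := by
    intro r hr
    rw [← Finset.sum_fiberwise Finset.univ (fun v => (⟦v⟧ : Quotient s))
        (fun v => if r v then c v else 0)]
    refine Finset.sum_congr rfl fun j _ => ?_
    have hmem : ∀ v, (⟦v⟧ : Quotient s) = j → SameOrbit G vc j.out v := by
      intro v hv
      rw [← Quotient.out_eq j] at hv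
      exact sameOrbit_symm (Quotient.eq.mp hv)
    have step1 : ∑ v ∈ Finset.univ.filter (fun v => (⟦v⟧ : Quotient s) = j),
        (if r v then c v else 0)
        = ∑ v ∈ Finset.univ.filter (fun v => (⟦v⟧ : Quotient s) = j),
        (if r v then c j.out else 0) := by
      refine Finset.sum_congr rfl fun v hv => ?_
      rw [Finset.mem_filter] at hv
      rw [hc j.out v (hmem v hv.2)]
    rw [step1, ← Finset.sum_filter, Finset.filter_filter]
    have hset : Finset.univ.filter (fun v => (⟦v⟧ : Quotient s) = j ∧ r v)
        = Finset.univ.filter (fun v => SameOrbit G vc j.out v ∧ r v) := by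
      ext v
      simp only [Finset.mem_filter, Finset.mem_univ, true_and]
      constructor
      · rintro ⟨h1, h2⟩; exact ⟨hmem v h1, h2⟩
      · rintro ⟨h1, h2⟩
        refine ⟨?_, h2⟩
        rw [← Quotient.out_eq j]
        exact Quotient.eq.mpr (sameOrbit_symm h1)
    rw [hset, Finset.sum_const, nsmul_eq_mul]
    congr 1
    rw [Nat.card_eq_fintype_card, Fintype.card_subtype]
  rw [key p inferInstance, key q inferInstance]
  exact Finset.sum_congr rfl fun j _ => by rw [hcard j.out]

lemma mulVec_expand (Gt : SimpleGraph (V × Fin 2 ⊕ W)) [DecidableRel Gt.Adj]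
    (x : V × Fin 2 ⊕ W → ℝ) (u : V × Fin 2 ⊕ W) :
    (Gt.adjMatrix ℝ *ᵥ x) u =
      (∑ v : V, (if Gt.Adj u (Sum.inl (v, 0)) then x (Sum.inl (v, 0)) else 0)) +
      (∑ v : V, (if Gt.Adj u (Sum.inl (v, 1)) then x (Sum.inl (v, 1)) else 0)) +
      (∑ w : W, (if Gt.Adj u (Sum.inr w) then x (Sum.inr w) else 0)) := by
  simp only [mulVec, dotProduct, adjMatrix_apply, ite_mul, one_mul, zero_mul]
  rw [Fintype.sum_sum_type, Fintype.sum_prod_type]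
  simp only [Fin.sum_univ_two, Finset.sum_add_distrib]

lemma step_lemma (G : SimpleGraph V) (H : SimpleGraph W) (vc : V)
    (Gt : SimpleGraph (V × Fin 2 ⊕ W)) [DecidableRel Gt.Adj]
    (hC : IsConstruction1 G H vc Gt) (x : V × Fin 2 ⊕ W → ℝ)
    (h1 : ∀ v, x (Sum.inl (v, 1)) = - x (Sum.inl (v, 0)))
    (h2 : ∀ w, x (Sum.inr w) = 0)
    (h3 : ∀ v w, SameOrbit G vc v w → x (Sum.inl (v, 0)) = x (Sum.inl (w, 0))) :
    (∀ v, (Gt.adjMatrix ℝ *ᵥ x) (Sum.inl (v, 1)) = - (Gt.adjMatrix ℝ *ᵥ x) (Sum.inl (v, 0))) ∧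
    (∀ w, (Gt.adjMatrix ℝ *ᵥ x) (Sum.inr w) = 0) ∧
    (∀ v w, SameOrbit G vc v w →
      (Gt.adjMatrix ℝ *ᵥ x) (Sum.inl (v, 0)) = (Gt.adjMatrix ℝ *ᵥ x) (Sum.inl (w, 0))) := by
  classical
  obtain ⟨hAdj, hNo, _hH, hCard⟩ := hC
  -- the value at a first-copy vertex
  have e0 : ∀ v : V, (Gt.adjMatrix ℝ *ᵥ x) (Sum.inl (v, 0))
      = ∑ w : V, (if G.Adj v w then x (Sum.inl (w, 0)) else 0) := by
    intro v
    rw [mulVec_expand]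
    have t2 : (∑ w : V, (if Gt.Adj (Sum.inl (v, 0)) (Sum.inl (w, 1))
        then x (Sum.inl (w, 1)) else 0)) = 0 :=
      Finset.sum_eq_zero fun w _ => by rw [if_neg (hNo v w)]
    have t3 : (∑ w : W, (if Gt.Adj (Sum.inl (v, 0)) (Sum.inr w) then x (Sum.inr w) else 0)) = 0 :=
      Finset.sum_eq_zero fun w _ => by simp [h2 w]
    rw [t2, t3, add_zero, add_zero]
    exact Finset.sum_congr rfl fun w _ => if_congr (hAdj 0 v w) rfl rfl
  have e1 : ∀ v : V, (Gt.adjMatrix ℝ *ᵥ x) (Sum.inl (v, 1))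
      = ∑ w : V, (if G.Adj v w then x (Sum.inl (w, 1)) else 0) := by
    intro v
    rw [mulVec_expand]
    have t2 : (∑ w : V, (if Gt.Adj (Sum.inl (v, 1)) (Sum.inl (w, 0))
        then x (Sum.inl (w, 0)) else 0)) = 0 :=
      Finset.sum_eq_zero fun w _ => by
        rw [if_neg (fun h => hNo w v h.symm)]
    have t3 : (∑ w : W, (if Gt.Adj (Sum.inl (v, 1)) (Sum.inr w) then x (Sum.inr w) else 0)) = 0 :=
      Finset.sum_eq_zero fun w _ => by simp [h2 w]
    rw [t2, t3, zero_add, add_zero]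
    exact Finset.sum_congr rfl fun w _ => if_congr (hAdj 1 v w) rfl rfl
  refine ⟨?_, ?_, ?_⟩
  · intro v
    rw [e0 v, e1 v, ← Finset.sum_neg_distrib]
    refine Finset.sum_congr rfl fun w _ => ?_
    by_cases h : G.Adj v w <;> simp [h, h1 w]
  · intro w
    rw [mulVec_expand]
    have t3 : (∑ w' : W, (if Gt.Adj (Sum.inr w) (Sum.inr w') then x (Sum.inr w') else 0)) = 0 :=
      Finset.sum_eq_zero fun w' _ => by simp [h2 w']
    rw [t3, add_zero]
    have s0 : (∑ v : V, (if Gt.Adj (Sum.inr w) (Sum.inl (v, 0)) then x (Sum.inl (v, 0)) else 0))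
        = ∑ v : V, (if Gt.Adj (Sum.inl (v, 0)) (Sum.inr w) then x (Sum.inl (v, 0)) else 0) :=
      Finset.sum_congr rfl fun v _ => if_congr (Gt.adj_comm _ _) rfl rfl
    have s1 : (∑ v : V, (if Gt.Adj (Sum.inr w) (Sum.inl (v, 1)) then x (Sum.inl (v, 1)) else 0))
        = - ∑ v : V, (if Gt.Adj (Sum.inl (v, 1)) (Sum.inr w) then x (Sum.inl (v, 0)) else 0) := by
      rw [← Finset.sum_neg_distrib]
      refine Finset.sum_congr rfl fun v _ => ?_
      by_cases h : Gt.Adj (Sum.inl (v, 1)) (Sum.inr w)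
      · rw [if_pos h.symm, if_pos h, h1 v]
      · rw [if_neg (fun h' => h h'.symm), if_neg h, neg_zero]
    rw [s0, s1]
    have := orbit_sum_eq G vc (fun v => x (Sum.inl (v, 0))) h3
      (fun v => Gt.Adj (Sum.inl (v, 0)) (Sum.inr w))
      (fun v => Gt.Adj (Sum.inl (v, 1)) (Sum.inr w))
      (fun u => hCard w u)
    rw [this]
    ring
  · intro v v' hvv'
    obtain ⟨φ, hfix, hmap⟩ := hvv'
    rw [e0 v, e0 v']
    refine Fintype.sum_equiv φ.toEquiv _ _ fun w => ?_
    have hx : x (Sum.inl (w, 0)) = x (Sum.inl (φ w, 0)) :=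
      h3 w (φ w) ⟨φ, hfix, rfl⟩
    have hadj : G.Adj v w ↔ G.Adj v' (φ w) := by
      rw [← hmap]
      exact (φ.map_adj_iff).symm
    show _ = if G.Adj v' (φ w) then x (Sum.inl (φ w, 0)) else 0
    by_cases h : G.Adj v w
    · rw [if_pos h, if_pos (hadj.mp h), hx]
    · rw [if_neg h, if_neg (fun h' => h (hadj.mpr h'))]

end Aux

theorem construction1_antisymmetric_on_copies {V W : Type*} [Fintype V] [Fintype W]
    [DecidableEq V] [DecidableEq W]
    (G : SimpleGraph V) (H : SimpleGraph W) (vc : V)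
    (Gt : SimpleGraph (V × Fin 2 ⊕ W)) [DecidableRel Gt.Adj]
    (hC : IsConstruction1 G H vc Gt) (k : ℕ) (v : V) :
    ((Gt.adjMatrix ℝ ^ k) *ᵥ
        (Pi.single (Sum.inl (vc, 0)) 1 - Pi.single (Sum.inl (vc, 1)) 1)) (Sum.inl (v, 0)) =
      -(((Gt.adjMatrix ℝ ^ k) *ᵥ
        (Pi.single (Sum.inl (vc, 0)) 1 - Pi.single (Sum.inl (vc, 1)) 1)) (Sum.inl (v, 1))) := by
  classical
  set x0 : V × Fin 2 ⊕ W → ℝ :=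
    Pi.single (Sum.inl (vc, 0)) 1 - Pi.single (Sum.inl (vc, 1)) 1 with hx0
  suffices H : ∀ k : ℕ,
      (∀ v, ((Gt.adjMatrix ℝ ^ k) *ᵥ x0) (Sum.inl (v, 1))
        = - ((Gt.adjMatrix ℝ ^ k) *ᵥ x0) (Sum.inl (v, 0))) ∧
      (∀ w, ((Gt.adjMatrix ℝ ^ k) *ᵥ x0) (Sum.inr w) = 0) ∧
      (∀ v w, SameOrbit G vc v w →
        ((Gt.adjMatrix ℝ ^ k) *ᵥ x0) (Sum.inl (v, 0))
          = ((Gt.adjMatrix ℝ ^ k) *ᵥ x0) (Sum.inl (w, 0))) by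
    rw [(H k).1 v, neg_neg]
  intro k
  induction k with
  | zero =>
    simp only [pow_zero, one_mulVec]
    refine ⟨?_, ?_, ?_⟩
    · intro u
      by_cases hu : u = vc <;>
        simp [hx0, Pi.single_apply, Prod.ext_iff, hu,
          (by decide : (1 : Fin 2) ≠ 0), (by decide : (0 : Fin 2) ≠ 1)]
    · intro w
      simp [hx0, Pi.single_apply]
    · intro u w huw
      have hiff : u = vc ↔ w = vc := by
        obtain ⟨φ, h1, h2⟩ := huw
        constructor
        · rintro rfl; rw [← h2, h1]
        · rintro rfl
          rw [← h1] at h2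
          exact φ.injective h2
      simp only [hx0, Pi.sub_apply, Pi.single_apply, Sum.inl.injEq, Prod.mk.injEq]
      by_cases hu : u = vc
      · simp [hu, hiff.mp hu]
      · have hw : ¬ w = vc := fun h => hu (hiff.mpr h)
        simp [hu, hw]
  | succ n ih =>
    obtain ⟨ih1, ih2, ih3⟩ := ih
    have hrw : (Gt.adjMatrix ℝ ^ (n + 1)) *ᵥ x0
        = Gt.adjMatrix ℝ *ᵥ ((Gt.adjMatrix ℝ ^ n) *ᵥ x0) := by
      rw [mulVec_mulVec, ← pow_succ']
    rw [hrw]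
    exact step_lemma G H vc Gt hC _ ih1 ih2 ih3
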